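/- arXiv:2603.08948 — 4 statements merged into one kernel-verified Lean document; each statement's English description precedes it below -/
import Mathlib

section
/- Let d ≥ 1 and t ≥ 1 be integers, let U(d) be the compact group of d×d complex unitary matrices with Haar probability measure μ_H, and define γ(t,d) = ∫_{U(d)} |tr(u)|^{2t} dμ_H(u). Then for every Borel probability measure ν on U(d), the pairwise-overlap average F_t(ν) = ∬_{U(d)×U(d)} |tr(x⁻¹·y)|^{2t} dν(x) dν(y) satisfies F_t(ν) ≥ γ(t,d). -/
open MeasureTheory Complex

noncomputable section PO

variable {d t : ℕ}

/-- Coordinate functions whose pairwise Hermitian products expand `|tr(x⁻¹y)|^{2t}`. -/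
def poPhi (d t : ℕ) (u : Matrix.unitaryGroup (Fin d) ℂ)
    (i : (Fin t → Fin d × Fin d) × (Fin t → Fin d × Fin d)) : ℂ :=
  (∏ k, (u : Matrix (Fin d) (Fin d) ℂ) (i.1 k).1 (i.1 k).2) *
    (starRingEnd ℂ) (∏ k, (u : Matrix (Fin d) (Fin d) ℂ) (i.2 k).1 (i.2 k).2)

lemma po_trace (x y : Matrix.unitaryGroup (Fin d) ℂ) :
    Matrix.trace ((x⁻¹ * y : Matrix.unitaryGroup (Fin d) ℂ) : Matrix (Fin d) (Fin d) ℂ)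
      = ∑ p : Fin d × Fin d,
          (starRingEnd ℂ) ((x : Matrix (Fin d) (Fin d) ℂ) p.1 p.2)
            * (y : Matrix (Fin d) (Fin d) ℂ) p.1 p.2 := by
  rw [Fintype.sum_prod_type]
  simp only [Matrix.UnitaryGroup.mul_val, Matrix.UnitaryGroup.inv_val, Matrix.trace,
    Matrix.diag, Matrix.mul_apply, Matrix.star_eq_conjTranspose, Matrix.conjTranspose_apply]
  rw [Finset.sum_comm]
  simp [RCLike.star_def]

lemma po_key (x y : Matrix.unitaryGroup (Fin d) ℂ) :
    ((‖Matrix.trace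
        ((x⁻¹ * y : Matrix.unitaryGroup (Fin d) ℂ) : Matrix (Fin d) (Fin d) ℂ)‖ ^ (2 * t) : ℝ) : ℂ)
      = ∑ i : (Fin t → Fin d × Fin d) × (Fin t → Fin d × Fin d),
          (starRingEnd ℂ) (poPhi d t x i) * poPhi d t y i := by
  set z : ℂ := Matrix.trace ((x⁻¹ * y : Matrix.unitaryGroup (Fin d) ℂ) : Matrix (Fin d) (Fin d) ℂ)
    with hzdef
  have h1 : ((‖z‖ ^ (2 * t) : ℝ) : ℂ) = z ^ t * (starRingEnd ℂ) z ^ t := by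
    have : ‖z‖ ^ (2 * t) = Complex.normSq z ^ t := by
      rw [pow_mul, Complex.sq_norm]
    rw [this]
    push_cast
    rw [← Complex.mul_conj, mul_pow]
  set c : Fin d × Fin d → ℂ := fun p =>
    (starRingEnd ℂ) ((x : Matrix (Fin d) (Fin d) ℂ) p.1 p.2)
      * (y : Matrix (Fin d) (Fin d) ℂ) p.1 p.2 with hc
  have hz : z = ∑ p, c p := po_trace x y
  rw [h1, hz, map_sum, Fintype.sum_pow, Fintype.sum_pow, Finset.sum_mul_sum,
    Fintype.sum_prod_type]
  refine Finset.sum_congr rfl fun f _ => Finset.sum_congr rfl fun g _ => ?_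
  simp only [poPhi, hc, map_mul, map_prod, Complex.conj_conj, Finset.prod_mul_distrib]
  ring

lemma po_entry_abs_le_one (u : Matrix.unitaryGroup (Fin d) ℂ) (a b : Fin d) :
    ‖(u : Matrix (Fin d) (Fin d) ℂ) a b‖ ≤ 1 := by
  have h := Matrix.UnitaryGroup.star_mul_self u
  have h2 : ∑ c, Complex.normSq ((u : Matrix (Fin d) (Fin d) ℂ) c b) = 1 := by
    have h3 : (star (u : Matrix (Fin d) (Fin d) ℂ) * (u : Matrix (Fin d) (Fin d) ℂ)) b b
        = (1 : Matrix (Fin d) (Fin d) ℂ) b b := by rw [h]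
    simp only [Matrix.mul_apply, Matrix.star_eq_conjTranspose, Matrix.conjTranspose_apply,
      Matrix.one_apply_eq] at h3
    have : ∀ c, star ((u : Matrix (Fin d) (Fin d) ℂ) c b) * (u : Matrix (Fin d) (Fin d) ℂ) c b
        = (Complex.normSq ((u : Matrix (Fin d) (Fin d) ℂ) c b) : ℂ) := by
      intro c; rw [mul_comm, RCLike.star_def, Complex.mul_conj]
    rw [Finset.sum_congr rfl (fun c _ => this c)] at h3
    exact_mod_cast h3
  have h4 : Complex.normSq ((u : Matrix (Fin d) (Fin d) ℂ) a b) ≤ 1 := by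
    rw [← h2]
    exact Finset.single_le_sum
      (f := fun c => Complex.normSq ((u : Matrix (Fin d) (Fin d) ℂ) c b))
      (fun c _ => Complex.normSq_nonneg _) (Finset.mem_univ a)
  rw [Complex.norm_def]
  have := Real.sqrt_le_sqrt h4
  simpa using this

lemma po_phi_norm_le_one (u : Matrix.unitaryGroup (Fin d) ℂ)
    (i : (Fin t → Fin d × Fin d) × (Fin t → Fin d × Fin d)) :
    ‖poPhi d t u i‖ ≤ 1 := by
  have hp : ∀ (f : Fin t → Fin d × Fin d),
      ‖∏ k, (u : Matrix (Fin d) (Fin d) ℂ) (f k).1 (f k).2‖ ≤ 1 := by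
    intro f
    rw [norm_prod]
    exact Finset.prod_le_one (fun k _ => norm_nonneg _)
      (fun k _ => po_entry_abs_le_one u (f k).1 (f k).2)
  rw [poPhi, norm_mul, RCLike.norm_conj]
  calc ‖∏ k, (u : Matrix (Fin d) (Fin d) ℂ) (i.1 k).1 (i.1 k).2‖ *
        ‖∏ k, (u : Matrix (Fin d) (Fin d) ℂ) (i.2 k).1 (i.2 k).2‖
      ≤ 1 * 1 := mul_le_mul (hp _) (hp _) (norm_nonneg _) zero_le_one
    _ = 1 := one_mul 1

lemma po_phi_continuous (i : (Fin t → Fin d × Fin d) × (Fin t → Fin d × Fin d)) :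
    Continuous (fun u : Matrix.unitaryGroup (Fin d) ℂ => poPhi d t u i) := by
  have hent : ∀ a b : Fin d,
      Continuous (fun u : Matrix.unitaryGroup (Fin d) ℂ => (u : Matrix (Fin d) (Fin d) ℂ) a b) :=
    fun a b => (continuous_apply b).comp ((continuous_apply a).comp continuous_subtype_val)
  exact (continuous_finset_prod _ fun k _ => hent _ _).mul
    (Complex.continuous_conj.comp (continuous_finset_prod _ fun k _ => hent _ _))

instance po_matrixSecondCountable :
    SecondCountableTopology (Matrix (Fin d) (Fin d) ℂ) :=
  inferInstanceAs (SecondCountableTopology (Fin d → Fin d → ℂ))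

instance po_unitarySecondCountable :
    SecondCountableTopology (Matrix.unitaryGroup (Fin d) ℂ) :=
  TopologicalSpace.secondCountableTopology_induced _ (Matrix (Fin d) (Fin d) ℂ) Subtype.val

lemma po_integrable {X : Type*} [TopologicalSpace X] [MeasurableSpace X] [BorelSpace X]
    (μ : Measure X) [IsFiniteMeasure μ] {f : X → ℂ} (hf : Continuous f) {C : ℝ}
    (hC : ∀ x, ‖f x‖ ≤ C) : Integrable f μ :=
  (integrable_const C).mono' hf.aestronglyMeasurable (Filter.Eventually.of_forall hC)

section Meas

variable [MeasurableSpace (Matrix.unitaryGroup (Fin d) ℂ)]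
  [BorelSpace (Matrix.unitaryGroup (Fin d) ℂ)]

lemma po_invariance (μH : Measure (Matrix.unitaryGroup (Fin d) ℂ))
    [IsProbabilityMeasure μH] [μH.IsMulLeftInvariant] (y : Matrix.unitaryGroup (Fin d) ℂ) :
    (∫ x : Matrix.unitaryGroup (Fin d) ℂ,
        ((‖Matrix.trace
          ((x⁻¹ * y : Matrix.unitaryGroup (Fin d) ℂ) : Matrix (Fin d) (Fin d) ℂ)‖ ^ (2 * t) : ℝ)
          : ℂ) ∂μH)
      = ∫ u : Matrix.unitaryGroup (Fin d) ℂ,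
          ((‖Matrix.trace ((u : Matrix (Fin d) (Fin d) ℂ))‖ ^ (2 * t) : ℝ) : ℂ) ∂μH := by
  have hFinv : ∀ x : Matrix.unitaryGroup (Fin d) ℂ,
      ‖Matrix.trace ((x⁻¹ : Matrix.unitaryGroup (Fin d) ℂ) : Matrix (Fin d) (Fin d) ℂ)‖
        = ‖Matrix.trace ((x : Matrix (Fin d) (Fin d) ℂ))‖ := by
    intro x
    rw [Matrix.UnitaryGroup.inv_val, Matrix.star_eq_conjTranspose, Matrix.trace_conjTranspose,
      RCLike.star_def, RCLike.norm_conj]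
  have key := integral_mul_left_eq_self (μ := μH)
    (fun x : Matrix.unitaryGroup (Fin d) ℂ =>
      ((‖Matrix.trace
        ((x⁻¹ : Matrix.unitaryGroup (Fin d) ℂ) : Matrix (Fin d) (Fin d) ℂ)‖ ^ (2 * t) : ℝ) : ℂ))
    y⁻¹
  simp only [mul_inv_rev, inv_inv] at key
  calc (∫ x : Matrix.unitaryGroup (Fin d) ℂ,
        ((‖Matrix.trace
          ((x⁻¹ * y : Matrix.unitaryGroup (Fin d) ℂ) : Matrix (Fin d) (Fin d) ℂ)‖ ^ (2 * t) : ℝ)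
          : ℂ) ∂μH)
      = ∫ x : Matrix.unitaryGroup (Fin d) ℂ,
          ((‖Matrix.trace
            ((x⁻¹ : Matrix.unitaryGroup (Fin d) ℂ) : Matrix (Fin d) (Fin d) ℂ)‖ ^ (2 * t) : ℝ)
            : ℂ) ∂μH := key
    _ = _ := by
        refine integral_congr_ae (Filter.Eventually.of_forall fun x => ?_)
        exact congrArg (fun r : ℝ => ((r ^ (2 * t) : ℝ) : ℂ)) (hFinv x)

end Meas

end PO

open MeasureTheory Complex

section POMain

variable {d t : ℕ}
variable [MeasurableSpace (Matrix.unitaryGroup (Fin d) ℂ)]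
  [BorelSpace (Matrix.unitaryGroup (Fin d) ℂ)]

lemma po_fact (μH : Measure (Matrix.unitaryGroup (Fin d) ℂ))
    [IsProbabilityMeasure μH] [μH.IsMulLeftInvariant]
    (ρ : Measure (Matrix.unitaryGroup (Fin d) ℂ)) [IsProbabilityMeasure ρ] :
    ∑ i : (Fin t → Fin d × Fin d) × (Fin t → Fin d × Fin d),
        (starRingEnd ℂ) (∫ x, poPhi d t x i ∂μH) * (∫ y, poPhi d t y i ∂ρ)
      = ∫ u : Matrix.unitaryGroup (Fin d) ℂ,
          ((‖Matrix.trace ((u : Matrix (Fin d) (Fin d) ℂ))‖ ^ (2 * t) : ℝ) : ℂ) ∂μH := by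
  set Γ : ℂ := ∫ u : Matrix.unitaryGroup (Fin d) ℂ,
      ((‖Matrix.trace ((u : Matrix (Fin d) (Fin d) ℂ))‖ ^ (2 * t) : ℝ) : ℂ) ∂μH with hΓ
  set h : ((Fin t → Fin d × Fin d) × (Fin t → Fin d × Fin d)) → ℂ :=
    fun i => ∫ x, poPhi d t x i ∂μH with hh
  have hy : ∀ y : Matrix.unitaryGroup (Fin d) ℂ,
      ∑ i, (starRingEnd ℂ) (h i) * poPhi d t y i = Γ := by
    intro y
    calc ∑ i, (starRingEnd ℂ) (h i) * poPhi d t y i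
        = ∑ i, ∫ x, (starRingEnd ℂ) (poPhi d t x i) * poPhi d t y i ∂μH := by
          refine Finset.sum_congr rfl fun i _ => ?_
          rw [hh]
          rw [← integral_conj, ← integral_mul_const]
      _ = ∫ x, ∑ i, (starRingEnd ℂ) (poPhi d t x i) * poPhi d t y i ∂μH := by
          refine (integral_finset_sum _ fun i _ => ?_).symm
          refine po_integrable μH
            ((Complex.continuous_conj.comp (po_phi_continuous i)).mul continuous_const)
            (C := ‖poPhi d t y i‖) fun x => ?_
          rw [norm_mul, RCLike.norm_conj]
          exact mul_le_of_le_one_left (norm_nonneg _) (po_phi_norm_le_one x i)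
      _ = ∫ x : Matrix.unitaryGroup (Fin d) ℂ,
            ((‖Matrix.trace
              ((x⁻¹ * y : Matrix.unitaryGroup (Fin d) ℂ) : Matrix (Fin d) (Fin d) ℂ)‖ ^ (2 * t)
              : ℝ) : ℂ) ∂μH := by
          refine integral_congr_ae (Filter.Eventually.of_forall fun x => ?_)
          exact (po_key x y).symm
      _ = Γ := po_invariance μH y
  calc ∑ i, (starRingEnd ℂ) (h i) * (∫ y, poPhi d t y i ∂ρ)
      = ∑ i, ∫ y, (starRingEnd ℂ) (h i) * poPhi d t y i ∂ρ := by
        refine Finset.sum_congr rfl fun i _ => ?_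
        rw [integral_const_mul]
    _ = ∫ y, ∑ i, (starRingEnd ℂ) (h i) * poPhi d t y i ∂ρ := by
        refine (integral_finset_sum _ fun i _ => ?_).symm
        refine po_integrable ρ (continuous_const.mul (po_phi_continuous i))
          (C := ‖h i‖) fun y => ?_
        rw [norm_mul, RCLike.norm_conj]
        exact mul_le_of_le_one_right (norm_nonneg _) (po_phi_norm_le_one y i)
    _ = ∫ _y : Matrix.unitaryGroup (Fin d) ℂ, Γ ∂ρ :=
        integral_congr_ae (Filter.Eventually.of_forall fun y => hy y)
    _ = Γ := by simp

theorem pairwise_overlap_average_ge_haar_moment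
    {d t : ℕ} (hd : 1 ≤ d) (ht : 1 ≤ t)
    [MeasurableSpace (Matrix.unitaryGroup (Fin d) ℂ)]
    [BorelSpace (Matrix.unitaryGroup (Fin d) ℂ)]
    (μH : Measure (Matrix.unitaryGroup (Fin d) ℂ))
    [IsProbabilityMeasure μH] [μH.IsMulLeftInvariant] [μH.Regular]
    (ν : Measure (Matrix.unitaryGroup (Fin d) ℂ)) [IsProbabilityMeasure ν] :
    (∫ p : Matrix.unitaryGroup (Fin d) ℂ × Matrix.unitaryGroup (Fin d) ℂ,
        ‖Matrix.trace
          ((p.1⁻¹ * p.2 : Matrix.unitaryGroup (Fin d) ℂ) : Matrix (Fin d) (Fin d) ℂ)‖ ^ (2 * t)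
        ∂(ν.prod ν)) ≥
      ∫ u : Matrix.unitaryGroup (Fin d) ℂ,
        ‖Matrix.trace ((u : Matrix (Fin d) (Fin d) ℂ))‖ ^ (2 * t) ∂μH := by
  set A : ℝ := ∫ p : Matrix.unitaryGroup (Fin d) ℂ × Matrix.unitaryGroup (Fin d) ℂ,
      ‖Matrix.trace
        ((p.1⁻¹ * p.2 : Matrix.unitaryGroup (Fin d) ℂ) : Matrix (Fin d) (Fin d) ℂ)‖ ^ (2 * t)
      ∂(ν.prod ν) with hA
  set H : ℝ := ∫ u : Matrix.unitaryGroup (Fin d) ℂ,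
      ‖Matrix.trace ((u : Matrix (Fin d) (Fin d) ℂ))‖ ^ (2 * t) ∂μH with hH
  set a : ((Fin t → Fin d × Fin d) × (Fin t → Fin d × Fin d)) → ℂ :=
    fun i => ∫ y, poPhi d t y i ∂ν with ha
  set h : ((Fin t → Fin d × Fin d) × (Fin t → Fin d × Fin d)) → ℂ :=
    fun i => ∫ x, poPhi d t x i ∂μH with hhdef
  -- H as a complex integral
  have hHc : ((H : ℝ) : ℂ) = ∫ u : Matrix.unitaryGroup (Fin d) ℂ,
      ((‖Matrix.trace ((u : Matrix (Fin d) (Fin d) ℂ))‖ ^ (2 * t) : ℝ) : ℂ) ∂μH :=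
    (integral_ofReal).symm
  -- Fact A
  have hAc : ((A : ℝ) : ℂ) = ∑ i, (starRingEnd ℂ) (a i) * a i := by
    rw [hA]
    calc ((∫ p : Matrix.unitaryGroup (Fin d) ℂ × Matrix.unitaryGroup (Fin d) ℂ,
          ‖Matrix.trace
            ((p.1⁻¹ * p.2 : Matrix.unitaryGroup (Fin d) ℂ) : Matrix (Fin d) (Fin d) ℂ)‖
            ^ (2 * t) ∂(ν.prod ν) : ℝ) : ℂ)
        = ∫ p : Matrix.unitaryGroup (Fin d) ℂ × Matrix.unitaryGroup (Fin d) ℂ,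
            ((‖Matrix.trace
              ((p.1⁻¹ * p.2 : Matrix.unitaryGroup (Fin d) ℂ) : Matrix (Fin d) (Fin d) ℂ)‖
              ^ (2 * t) : ℝ) : ℂ) ∂(ν.prod ν) := integral_ofReal.symm
      _ = ∫ p : Matrix.unitaryGroup (Fin d) ℂ × Matrix.unitaryGroup (Fin d) ℂ,
            ∑ i, (starRingEnd ℂ) (poPhi d t p.1 i) * poPhi d t p.2 i ∂(ν.prod ν) := by
          refine integral_congr_ae (Filter.Eventually.of_forall fun p => ?_)
          exact po_key p.1 p.2
      _ = ∑ i, ∫ p : Matrix.unitaryGroup (Fin d) ℂ × Matrix.unitaryGroup (Fin d) ℂ,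
            (starRingEnd ℂ) (poPhi d t p.1 i) * poPhi d t p.2 i ∂(ν.prod ν) := by
          refine integral_finset_sum _ fun i _ => ?_
          refine po_integrable (ν.prod ν)
            ((Complex.continuous_conj.comp ((po_phi_continuous i).comp continuous_fst)).mul
              ((po_phi_continuous i).comp continuous_snd)) (C := 1) fun p => ?_
          rw [norm_mul, RCLike.norm_conj]
          calc ‖poPhi d t p.1 i‖ * ‖poPhi d t p.2 i‖ ≤ 1 * 1 :=
                mul_le_mul (po_phi_norm_le_one _ _) (po_phi_norm_le_one _ _)
                  (norm_nonneg _) zero_le_one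
            _ = 1 := one_mul 1
      _ = ∑ i, (starRingEnd ℂ) (a i) * a i := by
          refine Finset.sum_congr rfl fun i _ => ?_
          rw [integral_prod_mul (fun x => (starRingEnd ℂ) (poPhi d t x i))
            (fun y => poPhi d t y i), integral_conj]
  -- Facts from invariance
  have h2 : ∑ i, (starRingEnd ℂ) (h i) * a i = ((H : ℝ) : ℂ) := by
    rw [hHc]; exact po_fact μH ν
  have h3 : ∑ i, (starRingEnd ℂ) (h i) * h i = ((H : ℝ) : ℂ) := by
    rw [hHc]; exact po_fact μH μH
  have h4 : ∑ i, (starRingEnd ℂ) (a i) * h i = ((H : ℝ) : ℂ) := by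
    have := congrArg (starRingEnd ℂ) h2
    rw [map_sum] at this
    simp only [map_mul, Complex.conj_conj, Complex.conj_ofReal] at this
    rw [← this]
    exact Finset.sum_congr rfl fun i _ => mul_comm _ _
  -- positivity
  have hexp : ∑ i, (starRingEnd ℂ) (a i - h i) * (a i - h i) = ((A : ℝ) : ℂ) - ((H : ℝ) : ℂ) := by
    have step : ∀ i, (starRingEnd ℂ) (a i - h i) * (a i - h i)
        = ((starRingEnd ℂ) (a i) * a i - (starRingEnd ℂ) (h i) * a i)
          - ((starRingEnd ℂ) (a i) * h i - (starRingEnd ℂ) (h i) * h i) := by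
      intro i; rw [map_sub]; ring
    rw [Finset.sum_congr rfl fun i _ => step i, Finset.sum_sub_distrib,
      Finset.sum_sub_distrib, Finset.sum_sub_distrib, hAc, h2, h3, h4]
    ring
  have hns : ∑ i, (starRingEnd ℂ) (a i - h i) * (a i - h i)
      = ((∑ i, Complex.normSq (a i - h i) : ℝ) : ℂ) := by
    push_cast
    exact Finset.sum_congr rfl fun i _ => (Complex.normSq_eq_conj_mul_self).symm
  have hreal : A - H = ∑ i, Complex.normSq (a i - h i) := by
    have : ((A - H : ℝ) : ℂ) = ((∑ i, Complex.normSq (a i - h i) : ℝ) : ℂ) := by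
      rw [Complex.ofReal_sub, ← hexp, hns]
    exact_mod_cast this
  have hnn : 0 ≤ ∑ i, Complex.normSq (a i - h i) :=
    Finset.sum_nonneg fun i _ => Complex.normSq_nonneg _
  linarith [hreal ▸ hnn]

end POMain
end

section
/- Let d ≥ 1, t ≥ 1, and n ≥ 1 be integers, let U(d) be the compact group of d×d complex unitary matrices with Haar probability measure μ_H, and define γ(t,d) = ∫_{U(d)} |tr(u)|^{2t} dμ_H(u). Then for every finite family of unitaries U : {1,…,n} → U(d) (with uniform weights 1/n), one has (1/n²) Σ_{x=1}^{n} Σ_{y=1}^{n} |tr(U(x)⁻¹·U(y))|^{2t} ≥ γ(t,d). -/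
open MeasureTheory
open scoped ComplexConjugate

namespace FDAux

variable {d t : ℕ}

noncomputable def w (d t : ℕ) (u : Matrix.unitaryGroup (Fin d) ℂ)
    (p : (Fin t → Fin d × Fin d) × (Fin t → Fin d × Fin d)) : ℂ :=
  (∏ k, (u : Matrix (Fin d) (Fin d) ℂ) (p.1 k).1 (p.1 k).2) *
    ∏ k, conj ((u : Matrix (Fin d) (Fin d) ℂ) (p.2 k).1 (p.2 k).2)

lemma sum_fn_prod (f : Fin d × Fin d → ℂ) :
    ∑ α : Fin t → Fin d × Fin d, ∏ k, f (α k) = (∑ q : Fin d × Fin d, f q) ^ t := by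
  classical
  have h := Finset.prod_univ_sum (fun _ : Fin t => (Finset.univ : Finset (Fin d × Fin d)))
    (fun _ q => f q)
  simp only [Fintype.piFinset_univ] at h
  rw [← h, Finset.prod_const, Finset.card_univ, Fintype.card_fin]

lemma trace_eq (u v : Matrix.unitaryGroup (Fin d) ℂ) :
    Matrix.trace (((u⁻¹ * v : Matrix.unitaryGroup (Fin d) ℂ) : Matrix (Fin d) (Fin d) ℂ)) =
      ∑ q : Fin d × Fin d,
        conj ((u : Matrix (Fin d) (Fin d) ℂ) q.1 q.2) * (v : Matrix (Fin d) (Fin d) ℂ) q.1 q.2 := by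
  have h : ((u⁻¹ * v : Matrix.unitaryGroup (Fin d) ℂ) : Matrix (Fin d) (Fin d) ℂ)
      = star (u : Matrix (Fin d) (Fin d) ℂ) * (v : Matrix (Fin d) (Fin d) ℂ) := rfl
  rw [h, Fintype.sum_prod_type]
  simp only [Matrix.trace, Matrix.diag_apply, Matrix.mul_apply, Matrix.star_apply,
    RCLike.star_def]
  exact Finset.sum_comm

lemma inner_w (u v : Matrix.unitaryGroup (Fin d) ℂ) :
    ∑ p : (Fin t → Fin d × Fin d) × (Fin t → Fin d × Fin d), conj (w d t u p) * w d t v p =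
      ((‖Matrix.trace
          (((u⁻¹ * v : Matrix.unitaryGroup (Fin d) ℂ) : Matrix (Fin d) (Fin d) ℂ))‖ ^ (2 * t)
        : ℝ) : ℂ) := by
  classical
  set z : ℂ := ∑ q : Fin d × Fin d,
    conj ((u : Matrix (Fin d) (Fin d) ℂ) q.1 q.2) * (v : Matrix (Fin d) (Fin d) ℂ) q.1 q.2 with hz
  have hterm : ∀ α β : Fin t → Fin d × Fin d,
      conj (w d t u (α, β)) * w d t v (α, β) =
        (∏ k, conj ((u : Matrix (Fin d) (Fin d) ℂ) (α k).1 (α k).2)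
            * (v : Matrix (Fin d) (Fin d) ℂ) (α k).1 (α k).2)
        * ∏ k, (u : Matrix (Fin d) (Fin d) ℂ) (β k).1 (β k).2
            * conj ((v : Matrix (Fin d) (Fin d) ℂ) (β k).1 (β k).2) := by
    intro α β
    simp only [w, map_mul, map_prod, Complex.conj_conj, Finset.prod_mul_distrib]
    ring
  calc ∑ p : (Fin t → Fin d × Fin d) × (Fin t → Fin d × Fin d), conj (w d t u p) * w d t v p
      = (∑ α : Fin t → Fin d × Fin d, ∏ k, conj ((u : Matrix (Fin d) (Fin d) ℂ) (α k).1 (α k).2)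
            * (v : Matrix (Fin d) (Fin d) ℂ) (α k).1 (α k).2)
        * ∑ β : Fin t → Fin d × Fin d, ∏ k, (u : Matrix (Fin d) (Fin d) ℂ) (β k).1 (β k).2
            * conj ((v : Matrix (Fin d) (Fin d) ℂ) (β k).1 (β k).2) := by
        rw [Fintype.sum_prod_type, Finset.sum_mul_sum]
        exact Finset.sum_congr rfl fun α _ => Finset.sum_congr rfl fun β _ => hterm α β
    _ = z ^ t * conj z ^ t := by
        rw [sum_fn_prod (fun q : Fin d × Fin d => conj ((u : Matrix (Fin d) (Fin d) ℂ) q.1 q.2)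
            * (v : Matrix (Fin d) (Fin d) ℂ) q.1 q.2),
          sum_fn_prod (fun q : Fin d × Fin d => (u : Matrix (Fin d) (Fin d) ℂ) q.1 q.2
            * conj ((v : Matrix (Fin d) (Fin d) ℂ) q.1 q.2)), ← hz]
        congr 2
        rw [map_sum]
        exact Finset.sum_congr rfl fun q _ => by simp [mul_comm]
    _ = ((‖z‖ ^ (2 * t) : ℝ) : ℂ) := by
        rw [← mul_pow, Complex.mul_conj, pow_mul, ← Complex.sq_norm]
        push_cast
        ring
    _ = _ := by rw [trace_eq u v, ← hz]

lemma entry_abs_le (u : Matrix.unitaryGroup (Fin d) ℂ) (i j : Fin d) :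
    ‖(u : Matrix (Fin d) (Fin d) ℂ) i j‖ ≤ 1 := by
  have h := Matrix.UnitaryGroup.star_mul_self u
  have h2 : (star (u : Matrix (Fin d) (Fin d) ℂ) * (u : Matrix (Fin d) (Fin d) ℂ)) j j
      = (1 : Matrix (Fin d) (Fin d) ℂ) j j := by rw [h]
  rw [Matrix.one_apply_eq, Matrix.mul_apply] at h2
  simp only [Matrix.star_apply, RCLike.star_def] at h2
  have h3 : ((∑ k, Complex.normSq ((u : Matrix (Fin d) (Fin d) ℂ) k j) : ℝ) : ℂ) = 1 := by
    push_cast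
    rw [← h2]
    exact Finset.sum_congr rfl fun k _ => by
      rw [Complex.normSq_eq_conj_mul_self]
  have h4 : ∑ k, Complex.normSq ((u : Matrix (Fin d) (Fin d) ℂ) k j) = 1 := by
    exact_mod_cast h3
  have h5 : Complex.normSq ((u : Matrix (Fin d) (Fin d) ℂ) i j) ≤ 1 := by
    rw [← h4]
    exact Finset.single_le_sum
      (f := fun k => Complex.normSq ((u : Matrix (Fin d) (Fin d) ℂ) k j))
      (fun k _ => Complex.normSq_nonneg _) (Finset.mem_univ i)
  rw [Complex.norm_def]
  exact Real.sqrt_le_one.mpr h5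

lemma norm_w_le (u : Matrix.unitaryGroup (Fin d) ℂ)
    (p : (Fin t → Fin d × Fin d) × (Fin t → Fin d × Fin d)) : ‖w d t u p‖ ≤ 1 := by
  rw [w, norm_mul, norm_prod, norm_prod]
  have h1 : ∏ k, ‖(u : Matrix (Fin d) (Fin d) ℂ) (p.1 k).1 (p.1 k).2‖ ≤ 1 :=
    Finset.prod_le_one (fun k _ => norm_nonneg _) (fun k _ => entry_abs_le u _ _)
  have h2 : ∏ k, ‖conj ((u : Matrix (Fin d) (Fin d) ℂ) (p.2 k).1 (p.2 k).2)‖ ≤ 1 :=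
    Finset.prod_le_one (fun k _ => norm_nonneg _)
      (fun k _ => by rw [Complex.norm_conj]; exact entry_abs_le u _ _)
  exact mul_le_one₀ h1 (Finset.prod_nonneg fun k _ => norm_nonneg _) h2

lemma continuous_w (p : (Fin t → Fin d × Fin d) × (Fin t → Fin d × Fin d)) :
    Continuous fun u : Matrix.unitaryGroup (Fin d) ℂ => w d t u p := by
  have hc : ∀ i j, Continuous fun u : Matrix.unitaryGroup (Fin d) ℂ =>
      (u : Matrix (Fin d) (Fin d) ℂ) i j := by
    intro i j
    have : Continuous fun A : Matrix (Fin d) (Fin d) ℂ => A i j :=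
      (continuous_apply j).comp (continuous_apply i)
    exact this.comp continuous_subtype_val
  exact ((continuous_finset_prod _ fun k _ => hc _ _).mul
    (continuous_finset_prod _ fun k _ => Complex.continuous_conj.comp (hc _ _)))

end FDAux

theorem finite_uniform_weight_design_bound
    {d t n : ℕ} (hd : 1 ≤ d) (ht : 1 ≤ t) (hn : 1 ≤ n)
    [MeasurableSpace (Matrix.unitaryGroup (Fin d) ℂ)]
    [BorelSpace (Matrix.unitaryGroup (Fin d) ℂ)]
    (μH : Measure (Matrix.unitaryGroup (Fin d) ℂ))
    [IsProbabilityMeasure μH] [μH.IsMulLeftInvariant] [μH.Regular]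
    (U : Fin n → Matrix.unitaryGroup (Fin d) ℂ) :
    (1 / (n : ℝ) ^ 2) * ∑ x : Fin n, ∑ y : Fin n,
        ‖Matrix.trace
          (((U x)⁻¹ * U y : Matrix.unitaryGroup (Fin d) ℂ) : Matrix (Fin d) (Fin d) ℂ)‖ ^ (2 * t) ≥
      ∫ u : Matrix.unitaryGroup (Fin d) ℂ,
        ‖Matrix.trace ((u : Matrix (Fin d) (Fin d) ℂ))‖ ^ (2 * t) ∂μH := by
  classical
  have hG : True := trivial
  set φ : Matrix.unitaryGroup (Fin d) ℂ → ℝ := fun g =>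
    ‖Matrix.trace ((g : Matrix (Fin d) (Fin d) ℂ))‖ ^ (2 * t) with hφ
  set γ : ℝ := ∫ u : Matrix.unitaryGroup (Fin d) ℂ, φ u ∂μH with hγ
  -- basic integrability of the coordinate functions of w
  have hWint : ∀ p, Integrable (fun u : Matrix.unitaryGroup (Fin d) ℂ => FDAux.w d t u p) μH := by
    intro p
    exact ⟨(FDAux.continuous_w p).aestronglyMeasurable,
      HasFiniteIntegral.of_bounded (C := 1) (ae_of_all _ fun u => FDAux.norm_w_le u p)⟩
  -- invariance of φ under inversion
  have hφinv : ∀ g : Matrix.unitaryGroup (Fin d) ℂ, φ g⁻¹ = φ g := by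
    intro g
    have h1 : ((g⁻¹ : Matrix.unitaryGroup (Fin d) ℂ) : Matrix (Fin d) (Fin d) ℂ)
        = star ((g : Matrix (Fin d) (Fin d) ℂ)) := rfl
    simp only [hφ, h1, Matrix.star_eq_conjTranspose, Matrix.trace_conjTranspose,
      RCLike.star_def, Complex.norm_conj]
  -- shift invariance
  have hshift : ∀ v : Matrix.unitaryGroup (Fin d) ℂ, (∫ u : Matrix.unitaryGroup (Fin d) ℂ, φ (u⁻¹ * v) ∂μH) = γ := by
    intro v
    have he : (fun u : Matrix.unitaryGroup (Fin d) ℂ => φ (u⁻¹ * v)) = fun u : Matrix.unitaryGroup (Fin d) ℂ => φ (v⁻¹ * u) := by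
      funext u
      rw [← hφinv (v⁻¹ * u), mul_inv_rev, inv_inv]
    rw [he, hγ]
    exact integral_mul_left_eq_self φ v⁻¹
  -- the mean vector
  set m : (Fin t → Fin d × Fin d) × (Fin t → Fin d × Fin d) → ℂ :=
    fun p => ∫ u : Matrix.unitaryGroup (Fin d) ℂ, FDAux.w d t u p ∂μH with hm
  -- key identity
  have key : ∀ v : Matrix.unitaryGroup (Fin d) ℂ, ∑ p, conj (m p) * FDAux.w d t v p = ((γ : ℝ) : ℂ) := by
    intro v
    have h1 : ∀ p, conj (m p) * FDAux.w d t v p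
        = ∫ u : Matrix.unitaryGroup (Fin d) ℂ, conj (FDAux.w d t u p) * FDAux.w d t v p ∂μH := by
      intro p
      rw [hm, ← integral_conj, ← integral_mul_const]
    have h2 : ∀ p, Integrable (fun u : Matrix.unitaryGroup (Fin d) ℂ => conj (FDAux.w d t u p) * FDAux.w d t v p) μH := by
      intro p
      refine ⟨((Complex.continuous_conj.comp (FDAux.continuous_w p)).mul
        continuous_const).aestronglyMeasurable,
        HasFiniteIntegral.of_bounded (C := 1) (ae_of_all _ fun u => ?_)⟩
      rw [norm_mul, RCLike.norm_conj]
      exact mul_le_one₀ (FDAux.norm_w_le u p) (norm_nonneg _) (FDAux.norm_w_le v p)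
    calc ∑ p, conj (m p) * FDAux.w d t v p
        = ∑ p, ∫ u : Matrix.unitaryGroup (Fin d) ℂ, conj (FDAux.w d t u p) * FDAux.w d t v p ∂μH :=
          Finset.sum_congr rfl fun p _ => h1 p
      _ = ∫ u : Matrix.unitaryGroup (Fin d) ℂ, ∑ p, conj (FDAux.w d t u p) * FDAux.w d t v p ∂μH :=
          (integral_finset_sum _ fun p _ => h2 p).symm
      _ = ∫ u : Matrix.unitaryGroup (Fin d) ℂ, ((φ (u⁻¹ * v) : ℝ) : ℂ) ∂μH := by
          refine integral_congr_ae (Filter.Eventually.of_forall fun u => ?_)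
          exact FDAux.inner_w u v
      _ = ((∫ u : Matrix.unitaryGroup (Fin d) ℂ, φ (u⁻¹ * v) ∂μH : ℝ) : ℂ) := integral_ofReal
      _ = ((γ : ℝ) : ℂ) := by rw [hshift v]
  -- norm squared of the mean vector
  have key4 : ∑ p, conj (m p) * m p = ((γ : ℝ) : ℂ) := by
    have h1 : ∀ p, conj (m p) * m p = ∫ u : Matrix.unitaryGroup (Fin d) ℂ, conj (m p) * FDAux.w d t u p ∂μH := by
      intro p
      rw [hm, integral_const_mul]
    calc ∑ p, conj (m p) * m p
        = ∑ p, ∫ u : Matrix.unitaryGroup (Fin d) ℂ, conj (m p) * FDAux.w d t u p ∂μH :=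
          Finset.sum_congr rfl fun p _ => h1 p
      _ = ∫ u : Matrix.unitaryGroup (Fin d) ℂ, ∑ p, conj (m p) * FDAux.w d t u p ∂μH :=
          (integral_finset_sum _ fun p _ => (hWint p).const_mul _).symm
      _ = ∫ _u : Matrix.unitaryGroup (Fin d) ℂ, ((γ : ℝ) : ℂ) ∂μH :=
          integral_congr_ae (Filter.Eventually.of_forall fun u => key u)
      _ = ((γ : ℝ) : ℂ) := by simp
  -- the sum vector
  set s : (Fin t → Fin d × Fin d) × (Fin t → Fin d × Fin d) → ℂ :=
    fun p => ∑ x : Fin n, FDAux.w d t (U x) p with hs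
  set S : ℝ := ∑ x : Fin n, ∑ y : Fin n, φ ((U x)⁻¹ * U y) with hS
  have hss : ∑ p, conj (s p) * s p = ((S : ℝ) : ℂ) := by
    have h1 : ∀ p, conj (s p) * s p
        = ∑ x : Fin n, ∑ y : Fin n, conj (FDAux.w d t (U x) p) * FDAux.w d t (U y) p := by
      intro p
      rw [hs]
      rw [map_sum, Finset.sum_mul_sum]
    calc ∑ p, conj (s p) * s p
        = ∑ p, ∑ x : Fin n, ∑ y : Fin n,
            conj (FDAux.w d t (U x) p) * FDAux.w d t (U y) p :=
          Finset.sum_congr rfl fun p _ => h1 p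
      _ = ∑ x : Fin n, ∑ p, ∑ y : Fin n,
            conj (FDAux.w d t (U x) p) * FDAux.w d t (U y) p := Finset.sum_comm
      _ = ∑ x : Fin n, ∑ y : Fin n, ∑ p,
            conj (FDAux.w d t (U x) p) * FDAux.w d t (U y) p :=
          Finset.sum_congr rfl fun x _ => Finset.sum_comm
      _ = ∑ x : Fin n, ∑ y : Fin n, ((φ ((U x)⁻¹ * U y) : ℝ) : ℂ) :=
          Finset.sum_congr rfl fun x _ => Finset.sum_congr rfl fun y _ =>
            FDAux.inner_w (U x) (U y)
      _ = ((S : ℝ) : ℂ) := by rw [hS]; push_cast; rfl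
  have hms : ∑ p, conj (m p) * s p = (n : ℂ) * ((γ : ℝ) : ℂ) := by
    calc ∑ p, conj (m p) * s p
        = ∑ p, ∑ x : Fin n, conj (m p) * FDAux.w d t (U x) p := by
          refine Finset.sum_congr rfl fun p _ => ?_
          rw [hs, Finset.mul_sum]
      _ = ∑ x : Fin n, ∑ p, conj (m p) * FDAux.w d t (U x) p := Finset.sum_comm
      _ = ∑ _x : Fin n, ((γ : ℝ) : ℂ) := Finset.sum_congr rfl fun x _ => key (U x)
      _ = (n : ℂ) * ((γ : ℝ) : ℂ) := by
          rw [Finset.sum_const, Finset.card_univ, Fintype.card_fin, nsmul_eq_mul]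
  have hsm : ∑ p, conj (s p) * m p = (n : ℂ) * ((γ : ℝ) : ℂ) := by
    have h1 : ∑ p, conj (s p) * m p = conj (∑ p, conj (m p) * s p) := by
      rw [map_sum]
      exact Finset.sum_congr rfl fun p _ => by
        rw [map_mul, Complex.conj_conj, mul_comm]
    rw [h1, hms, map_mul, Complex.conj_ofReal, map_natCast]
  -- expansion of the nonnegative quantity
  have hexp : ∑ p, conj (s p - (n : ℂ) * m p) * (s p - (n : ℂ) * m p)
      = ((S : ℝ) : ℂ) - (n : ℂ) ^ 2 * ((γ : ℝ) : ℂ) := by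
    have h1 : ∀ p, conj (s p - (n : ℂ) * m p) * (s p - (n : ℂ) * m p)
        = conj (s p) * s p - (n : ℂ) * (conj (m p) * s p)
          - ((n : ℂ) * (conj (s p) * m p) - (n : ℂ) ^ 2 * (conj (m p) * m p)) := by
      intro p
      rw [map_sub, map_mul, map_natCast]
      ring
    rw [Finset.sum_congr rfl fun p _ => h1 p]
    simp only [Finset.sum_sub_distrib, ← Finset.mul_sum]
    rw [hss, hms, hsm, key4]
    ring
  have hpos : 0 ≤ (∑ p, conj (s p - (n : ℂ) * m p) * (s p - (n : ℂ) * m p)).re := by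
    rw [Complex.re_sum]
    refine Finset.sum_nonneg fun p _ => ?_
    rw [mul_comm, Complex.mul_conj, Complex.ofReal_re]
    exact Complex.normSq_nonneg _
  have hcast : ((S : ℝ) : ℂ) - (n : ℂ) ^ 2 * ((γ : ℝ) : ℂ)
      = (((S - (n : ℝ) ^ 2 * γ) : ℝ) : ℂ) := by push_cast; ring
  rw [hexp, hcast, Complex.ofReal_re] at hpos
  have hfin : (n : ℝ) ^ 2 * γ ≤ S := by linarith
  have hn2 : (0 : ℝ) < (n : ℝ) ^ 2 := by
    have : (0 : ℝ) < (n : ℝ) := by exact_mod_cast hn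
    positivity
  rw [ge_iff_le]
  have hγeq : γ = (1 / (n : ℝ) ^ 2) * ((n : ℝ) ^ 2 * γ) := by
    field_simp
  calc (∫ u : Matrix.unitaryGroup (Fin d) ℂ, ‖Matrix.trace ((u : Matrix (Fin d) (Fin d) ℂ))‖ ^ (2 * t) ∂μH)
      = γ := rfl
    _ = (1 / (n : ℝ) ^ 2) * ((n : ℝ) ^ 2 * γ) := hγeq
    _ ≤ (1 / (n : ℝ) ^ 2) * S := by
        apply mul_le_mul_of_nonneg_left hfin
        positivity
    _ = _ := rfl
end

section
/- Let d ≥ 1 and let A, B be d×d complex matrices. Then the map x ↦ exp(A + x·B) from ℝ to the d×d complex matrices is differentiable at x = 0 with derivative d/dx exp(A + x B)|_{x=0} = ∫₀¹ exp((1−s)·A) · B · exp(s·A) ds (Duhamel's formula), where the integral is the entrywise Bochner integral over s ∈ [0,1]. -/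
open NormedSpace

attribute [local instance]
  Matrix.linftyOpNormedAddCommGroup Matrix.linftyOpNormedSpace
  Matrix.linftyOpNormedRing Matrix.linftyOpNormedAlgebra

section aux

variable {d : ℕ} (A B : Matrix (Fin d) (Fin d) ℂ)

/-- derivative of `s ↦ exp ((s : ℂ) • M)` for real `s`. -/
lemma aux_hasDerivAt_exp_real (M : Matrix (Fin d) (Fin d) ℂ) (t : ℝ) :
    HasDerivAt (fun s : ℝ => exp ((s : ℂ) • M)) (exp ((t : ℂ) • M) * M) t := by
  have h := hasDerivAt_exp_smul_const (𝕂 := ℂ) M (t : ℂ)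
  have h2 := h.scomp t Complex.ofRealCLM.hasDerivAt
  simp [Function.comp_def] at h2
  exact h2

noncomputable instance matENorm (d : ℕ) :
    @ENormedAddMonoid (Matrix (Fin d) (Fin d) ℂ) instTopologicalSpaceMatrix :=
  NormedAddGroup.toENormedAddMonoid

end aux

set_option maxHeartbeats 1600000 in
theorem hasDerivAt_exp_duhamel
    {d : ℕ} (hd : 1 ≤ d) (A B : Matrix (Fin d) (Fin d) ℂ) :
    HasDerivAt
      (fun x : ℝ => exp (A + (x : ℂ) • B))
      (Matrix.of fun i j : Fin d =>
        ∫ s in (0 : ℝ)..1,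
          (exp (((1 - s : ℝ) : ℂ) • A) * B * exp ((s : ℂ) • A)) i j)
      0 := by
  classical
  set F : ℝ → ℝ → Matrix (Fin d) (Fin d) ℂ := fun x s =>
    exp (((1 - s : ℝ) : ℂ) • (A + (x : ℂ) • B)) * B * exp ((s : ℂ) • A) with hF
  -- joint continuity
  have hexp : Continuous (exp : Matrix (Fin d) (Fin d) ℂ → Matrix (Fin d) (Fin d) ℂ) :=
    exp_continuous
  have hFc : Continuous (Function.uncurry F) := by
    simp only [hF, Function.uncurry]
    apply Continuous.mul
    apply Continuous.mul
    · exact hexp.comp <| by fun_prop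
    · exact continuous_const
    · exact hexp.comp <| by fun_prop
  have hFx : ∀ x : ℝ, Continuous (F x) := by
    intro x
    simp only [hF]
    apply Continuous.mul
    apply Continuous.mul
    · exact hexp.comp <| by fun_prop
    · exact continuous_const
    · exact hexp.comp <| by fun_prop
  set I : ℝ → Matrix (Fin d) (Fin d) ℂ := fun x => ∫ s in (0:ℝ)..1, F x s with hI
  -- key identity
  have key : ∀ x : ℝ, exp (A + (x : ℂ) • B) = exp A + x • I x := by
    intro x
    set M := A + (x : ℂ) • B with hM
    set g : ℝ → Matrix (Fin d) (Fin d) ℂ := fun s =>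
      exp (((1 - s : ℝ) : ℂ) • M) * exp ((s : ℂ) • A) with hg
    have hderiv : ∀ s ∈ Set.uIcc (0:ℝ) 1, HasDerivAt g (-(x • F x s)) s := by
      intro s _
      have h1 : HasDerivAt (fun s : ℝ => exp (((1 - s : ℝ) : ℂ) • M))
          (-(exp (((1 - s : ℝ) : ℂ) • M) * M)) s := by
        have hinner : HasDerivAt (fun s : ℝ => 1 - s) (-1) s := by
          simpa using (hasDerivAt_id s).const_sub 1
        have h := (aux_hasDerivAt_exp_real M (1 - s)).scomp s hinner
        simp only [neg_smul, one_smul] at h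
        exact h
      have h2 := aux_hasDerivAt_exp_real A s
      have := h1.mul h2
      have hcomm : A * exp ((s : ℂ) • A) = exp ((s : ℂ) • A) * A := by
        have : Commute A ((s : ℂ) • A) := (Commute.refl A).smul_right _
        exact (this.exp_right).eq
      have hgoal : -(x • F x s)
          = -(exp (((1 - s : ℝ) : ℂ) • M) * M) * exp ((s : ℂ) • A)
            + exp (((1 - s : ℝ) : ℂ) • M) * (exp ((s : ℂ) • A) * A) := by
        rw [← hcomm]
        simp only [hF, hM]
        generalize exp (((1 - s : ℝ) : ℂ) • (A + (x : ℂ) • B)) = e₁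
        generalize exp ((s : ℂ) • A) = e₂
        rw [← algebraMap_smul ℂ x (e₁ * B * e₂), Complex.coe_algebraMap]
        simp only [mul_add, add_mul, smul_mul_assoc, mul_smul_comm, mul_assoc, neg_mul,
          neg_add_rev]
        abel
      rw [hgoal]
      exact this
    have hint : IntervalIntegrable (fun s => -(x • F x s)) MeasureTheory.volume 0 1 :=
      (((hFx x).const_smul x).neg).intervalIntegrable 0 1
    have hFTC := intervalIntegral.integral_eq_sub_of_hasDerivAt hderiv hint
    have hg1 : g 1 = exp A := by simp [hg]
    have hg0 : g 0 = exp M := by simp [hg]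
    rw [hg1, hg0] at hFTC
    have hlhs : (∫ s in (0:ℝ)..1, -(x • F x s)) = -(x • I x) := by
      rw [intervalIntegral.integral_neg, intervalIntegral.integral_smul]
    rw [hlhs] at hFTC
    have h2 : x • I x = exp M - exp A := by
      rw [← neg_sub, ← hFTC, neg_neg]
    rw [h2]
    abel
  -- continuity of I
  have hIcont : Continuous I :=
    intervalIntegral.continuous_parametric_intervalIntegral_of_continuous' hFc 0 1
  -- the target equals I 0
  have htarget : (Matrix.of fun i j : Fin d =>
      ∫ s in (0 : ℝ)..1,
        (exp (((1 - s : ℝ) : ℂ) • A) * B * exp ((s : ℂ) • A)) i j) = I 0 := by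
    ext i j
    have hii : IntervalIntegrable (F 0) MeasureTheory.volume 0 1 :=
      (hFx 0).intervalIntegrable 0 1
    have hcc := (LinearMap.toContinuousLinearMap
      (Matrix.entryLinearMap ℂ ℂ i j)).intervalIntegral_comp_comm hii
    have happly : (∫ s in (0:ℝ)..1, F 0 s) i j = ∫ s in (0:ℝ)..1, (F 0 s) i j := hcc.symm
    simp only [Matrix.of_apply, hI]
    rw [happly]
    congr 1
    funext s
    simp [hF]
  rw [htarget]
  -- conclude
  refine hasDerivAt_iff_tendsto_slope.mpr ?_
  have heq : ∀ x : ℝ, x ≠ 0 →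
      slope (fun x : ℝ => exp (A + (x : ℂ) • B)) 0 x = I x := by
    intro x hx
    rw [slope_def_module, key x, key 0, sub_zero, zero_smul, add_zero, add_sub_cancel_left,
      smul_smul, inv_mul_cancel₀ hx, one_smul]
  apply Filter.Tendsto.congr' _ ((hIcont.tendsto 0).mono_left nhdsWithin_le_nhds)
  filter_upwards [self_mem_nhdsWithin] with x hx
  exact (heq x hx).symm
end

section
/- Let d ≥ 1, let A, B be d×d complex matrices, and let Δt > 0 be a real number. Then the map u ↦ exp(−i·Δt·(A + u·B)) from ℝ to the d×d complex matrices is differentiable at every u₀ ∈ ℝ, with derivative d/du exp(−i Δt (A + u B))|_{u=u₀} = −i ∫₀^{Δt} exp(−i(Δt−τ)(A + u₀ B)) · B · exp(−i τ (A + u₀ B)) dτ. Equivalently, writing U(τ) = exp(−i τ (A + u₀ B)) and H̄·Δt = ∫₀^{Δt} U(τ) B U(−τ) dτ, the derivative equals −i Δt · H̄ · U(Δt). -/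
open NormedSpace

attribute [local instance]
  Matrix.linftyOpNormedAddCommGroup Matrix.linftyOpNormedSpace
  Matrix.linftyOpNormedRing Matrix.linftyOpNormedAlgebra

/-- The propagator `U(τ) = exp(−iτ(A + u₀B))` of the constant Hamiltonian `A + u₀·B`. -/
noncomputable def grapeProp {d : ℕ} (A B : Matrix (Fin d) (Fin d) ℂ) (u0 : ℝ) (τ : ℝ) :
    Matrix (Fin d) (Fin d) ℂ :=
  exp ((-Complex.I * (τ : ℂ)) • (A + (u0 : ℂ) • B))

/-- The exact (Duhamel/Fréchet) derivative of the GRAPE propagator with respect to the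
control amplitude: `−i ∫₀^{Δt} exp(−i(Δt−τ)H) B exp(−iτH) dτ`, as an entrywise
Bochner integral. -/
noncomputable def grapeDeriv {d : ℕ} (A B : Matrix (Fin d) (Fin d) ℂ) (u0 : ℝ) (Δt : ℝ) :
    Matrix (Fin d) (Fin d) ℂ :=
  Matrix.of fun i j : Fin d =>
    ∫ τ in (0 : ℝ)..Δt,
      ((-Complex.I) • (grapeProp A B u0 (Δt - τ) * B * grapeProp A B u0 τ)) i j

/-! ### Auxiliary lemmas -/

theorem grape_comp_ofReal {E : Type*} [NormedAddCommGroup E] [NormedSpace ℂ E] {e : ℂ → E}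
    {e' : E} {z : ℝ} (hf : HasDerivAt e e' z) : HasDerivAt (fun y : ℝ => e y) e' z := by
  simpa [Function.comp_def] using HasDerivAt.scomp (𝕜 := ℝ) (𝕜' := ℂ) z hf Complex.ofRealCLM.hasDerivAt

theorem grape_deriv_of_factor {E : Type*} [NormedAddCommGroup E] [NormedSpace ℝ E]
    {f : ℝ → E} {G : ℝ → E} {u0 : ℝ}
    (h : ∀ u, f u - f u0 = (u - u0) • G u) (hG : ContinuousAt G u0) :
    HasDerivAt f (G u0) u0 := by
  rw [hasDerivAt_iff_tendsto_slope]
  have heq : ∀ u ∈ ({u0}ᶜ : Set ℝ), G u = slope f u0 u := by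
    intro u hu
    have hne : u - u0 ≠ 0 := sub_ne_zero.2 hu
    rw [slope_def_module, h u, smul_smul, inv_mul_cancel₀ hne, one_smul]
  exact Filter.Tendsto.congr' (Filter.eventuallyEq_of_mem self_mem_nhdsWithin heq)
    hG.continuousWithinAt.tendsto

/-- The entry map as a continuous linear map. -/
noncomputable def grapeEntryCLM {d : ℕ} (i j : Fin d) : Matrix (Fin d) (Fin d) ℂ →L[ℂ] ℂ :=
  LinearMap.toContinuousLinearMap
    { toFun := fun M => M i j, map_add' := fun _ _ => rfl, map_smul' := fun _ _ => rfl }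

theorem grape_entry_intervalIntegral {d : ℕ} {h : ℝ → Matrix (Fin d) (Fin d) ℂ}
    (hh : Continuous h) (a b : ℝ) (i j : Fin d) :
    (∫ τ in a..b, h τ) i j = ∫ τ in a..b, h τ i j := by
  have := (grapeEntryCLM i j).intervalIntegral_comp_comm (hh.intervalIntegrable (μ := MeasureTheory.volume) a b)
  exact this.symm

theorem grape_intervalIntegral_mul_const {d : ℕ} {h : ℝ → Matrix (Fin d) (Fin d) ℂ}
    (hh : Continuous h) (a b : ℝ) (C : Matrix (Fin d) (Fin d) ℂ) :
    (∫ τ in a..b, h τ * C) = (∫ τ in a..b, h τ) * C := by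
  have := (LinearMap.toContinuousLinearMap
      (LinearMap.mulRight ℂ C)).intervalIntegral_comp_comm (hh.intervalIntegrable (μ := MeasureTheory.volume) a b)
  exact this

/-- Continuity of `s ↦ exp((s:ℂ) • Y)`. -/
theorem grape_exp_cont {d : ℕ} (Y : Matrix (Fin d) (Fin d) ℂ) :
    Continuous fun s : ℝ => exp ((s : ℂ) • Y) :=
  exp_continuous.comp (Complex.continuous_ofReal.smul continuous_const)

/-- Duhamel's difference formula. -/
theorem grape_duhamel {d : ℕ} (X Y : Matrix (Fin d) (Fin d) ℂ) :
    exp Y - exp X =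
      ∫ s in (0:ℝ)..1, exp ((s:ℂ) • Y) * (Y - X) * exp ((1 - (s:ℂ)) • X) := by
  have hderiv : ∀ s ∈ Set.uIcc (0:ℝ) 1,
      HasDerivAt (fun s : ℝ => exp ((s:ℂ) • Y) * exp ((1 - (s:ℂ)) • X))
        (exp ((s:ℂ) • Y) * (Y - X) * exp ((1 - (s:ℂ)) • X)) s := by
    intro s _
    have h1 : HasDerivAt (fun s : ℝ => exp ((s:ℂ) • Y)) (exp ((s:ℂ) • Y) * Y) s :=
      grape_comp_ofReal (hasDerivAt_exp_smul_const Y (s:ℂ))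
    have h2 : HasDerivAt (fun s : ℝ => exp ((1 - (s:ℂ)) • X))
        (-(X * exp ((1 - (s:ℂ)) • X))) s := by
      have hin : HasDerivAt (fun u : ℂ => 1 - u) (-1 : ℂ) (s:ℂ) := by
        simpa using (hasDerivAt_id (s:ℂ)).const_sub 1
      have hout := hasDerivAt_exp_smul_const' (𝕂 := ℂ) X ((1:ℂ) - s)
      exact grape_comp_ofReal (by simpa [neg_one_smul] using HasDerivAt.scomp (s:ℂ) hout hin)
    have := h1.mul h2
    refine this.congr_deriv ?_
    simp only [mul_sub, sub_mul, mul_neg, mul_assoc]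
    abel
  have hcont : Continuous fun s : ℝ =>
      exp ((s:ℂ) • Y) * (Y - X) * exp ((1 - (s:ℂ)) • X) := by
    apply Continuous.mul
    · exact (grape_exp_cont Y).mul continuous_const
    · exact exp_continuous.comp
        ((continuous_const.sub Complex.continuous_ofReal).smul continuous_const)
  have := intervalIntegral.integral_eq_sub_of_hasDerivAt hderiv (hcont.intervalIntegrable 0 1)
  rw [this]
  simp [exp_zero]

theorem hasDerivAt_grape_propagator
    {d : ℕ} (hd : 1 ≤ d) (A B : Matrix (Fin d) (Fin d) ℂ)
    (Δt : ℝ) (hΔt : 0 < Δt) (u0 : ℝ) :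
    HasDerivAt
      (fun u : ℝ => exp ((-Complex.I * (Δt : ℂ)) • (A + (u : ℂ) • B)))
      (grapeDeriv A B u0 Δt) u0 ∧
    ∀ Hbar : Matrix (Fin d) (Fin d) ℂ,
      (Δt : ℂ) • Hbar =
        (Matrix.of fun i j : Fin d =>
          ∫ τ in (0 : ℝ)..Δt,
            (grapeProp A B u0 τ * B * grapeProp A B u0 (-τ)) i j) →
      grapeDeriv A B u0 Δt = (-Complex.I * (Δt : ℂ)) • (Hbar * grapeProp A B u0 Δt) := by
  set c : ℂ := -Complex.I * (Δt:ℂ) with hc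
  set U : ℝ → Matrix (Fin d) (Fin d) ℂ := grapeProp A B u0 with hU
  set H : Matrix (Fin d) (Fin d) ℂ := A + (u0:ℂ) • B with hH
  have hUc : Continuous U := by
    rw [hU]; unfold grapeProp
    exact exp_continuous.comp
      ((continuous_const.mul Complex.continuous_ofReal).smul continuous_const)
  -- continuity of the main integrands
  have hcont1 : Continuous fun τ : ℝ => U (Δt - τ) * B * U τ :=
    ((hUc.comp (continuous_const.sub continuous_id)).mul continuous_const).mul hUc
  have hcont2 : Continuous fun τ : ℝ => U τ * B * U (-τ) :=
    ((hUc.mul continuous_const)).mul (hUc.comp continuous_neg)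
  -- the Bochner-integral form of grapeDeriv
  have hgd : grapeDeriv A B u0 Δt =
      ∫ τ in (0:ℝ)..Δt, (-Complex.I) • (U (Δt - τ) * B * U τ) := by
    apply Matrix.ext; intro i j
    rw [grape_entry_intervalIntegral (continuous_const.fun_smul hcont1)]
    rfl
  -- exponential rewriting: exp ((s:ℂ) • (c • H)) = U (s * Δt)
  have hexp1 : ∀ s : ℝ, exp ((s:ℂ) • (c • H)) = U (s * Δt) := by
    intro s
    rw [hU]; unfold grapeProp
    rw [← hH, smul_smul]
    congr 2
    push_cast; ring
  have hexp2 : ∀ s : ℝ, exp ((1 - (s:ℂ)) • (c • H)) = U ((1 - s) * Δt) := by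
    intro s
    rw [hU]; unfold grapeProp
    rw [← hH, smul_smul]
    congr 2
    push_cast; ring
  -- splitting: U (Δt - τ) = U (-τ) * U Δt
  have hsplit : ∀ τ : ℝ, U (Δt - τ) = U (-τ) * U Δt := by
    intro τ
    rw [hU]; unfold grapeProp
    rw [← Matrix.exp_add_of_commute _ _ (((Commute.refl (A + (u0:ℂ) • B)).smul_left _).smul_right _)]
    congr 1
    rw [← add_smul]
    congr 1
    push_cast; ring
  constructor
  · -- the derivative statement
    set Φ : ℝ → Matrix (Fin d) (Fin d) ℂ := fun u =>
      ∫ s in (0:ℝ)..1, exp ((s:ℂ) • (c • (A + (u:ℂ) • B))) * B *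
        exp ((1 - (s:ℂ)) • (c • H)) with hΦ
    have hΦcont : Continuous Φ := by
      have huncurry : Continuous (fun p : ℝ × ℝ =>
          exp ((p.2:ℂ) • (c • (A + (p.1:ℂ) • B))) * B *
            exp ((1 - (p.2:ℂ)) • (c • H))) := by
        have c1 : Continuous (fun p : ℝ × ℝ => exp ((p.2:ℂ) • (c • (A + (p.1:ℂ) • B)))) :=
          exp_continuous.comp ((Complex.continuous_ofReal.comp continuous_snd).smul
            (continuous_const.fun_smul (continuous_const.add
              ((Complex.continuous_ofReal.comp continuous_fst).fun_smul continuous_const))))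
        have c2 : Continuous (fun p : ℝ × ℝ => exp ((1 - (p.2:ℂ)) • (c • H))) :=
          exp_continuous.comp (((continuous_const.sub
            (Complex.continuous_ofReal.comp continuous_snd)).smul continuous_const))
        exact (c1.mul continuous_const).mul c2
      exact intervalIntegral.continuous_parametric_intervalIntegral_of_continuous' (X := ℝ)
        (E := Matrix (Fin d) (Fin d) ℂ) (μ := MeasureTheory.volume)
        (f := fun u s => exp ((s:ℂ) • (c • (A + (u:ℂ) • B))) * B *
          exp ((1 - (s:ℂ)) • (c • H))) huncurry 0 1
    have hkey : ∀ u : ℝ,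
        exp (c • (A + (u:ℂ) • B)) - exp (c • H) = (u - u0) • (c • Φ u) := by
      intro u
      have hdiff : c • (A + (u:ℂ) • B) - c • H = (((u:ℂ) - u0) * c) • B := by
        rw [hH, ← smul_sub, add_sub_add_left_eq_sub, ← sub_smul, smul_smul, mul_comm]
      rw [hH, grape_duhamel (c • (A + (u0:ℂ) • B)) (c • (A + (u:ℂ) • B))]
      have hptwise : ∀ s : ℝ,
          exp ((s:ℂ) • (c • (A + (u:ℂ) • B))) *
              (c • (A + (u:ℂ) • B) - c • (A + (u0:ℂ) • B)) *
              exp ((1 - (s:ℂ)) • (c • (A + (u0:ℂ) • B)))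
            = (((u:ℂ) - u0) * c) • (exp ((s:ℂ) • (c • (A + (u:ℂ) • B))) * B *
                exp ((1 - (s:ℂ)) • (c • (A + (u0:ℂ) • B)))) := by
        intro s
        rw [show c • (A + (u:ℂ) • B) - c • (A + (u0:ℂ) • B) = (((u:ℂ) - u0) * c) • B from
          by rw [← hH]; exact hdiff, mul_smul_comm, smul_mul_assoc]
      simp_rw [hptwise]
      rw [intervalIntegral.integral_smul]
      rw [show ((u:ℂ) - u0) = ((u - u0 : ℝ) : ℂ) by push_cast; ring, ← smul_smul,
        Complex.coe_smul]
    have hder := grape_deriv_of_factor (f := fun u : ℝ => exp (c • (A + (u:ℂ) • B)))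
      (G := fun u => c • Φ u) hkey ((continuous_const.fun_smul hΦcont).continuousAt)
    -- identify c • Φ u0 with grapeDeriv
    have hΦ0 : c • Φ u0 = grapeDeriv A B u0 Δt := by
      rw [hgd]
      have h1 : Φ u0 = ∫ s in (0:ℝ)..1, U (s * Δt) * B * U ((1 - s) * Δt) := by
        simp only [hΦ, ← hH, hexp1, hexp2]
      -- reflection s ↦ 1 - s
      have h2 : (∫ s in (0:ℝ)..1, U (s * Δt) * B * U ((1 - s) * Δt))
          = ∫ s in (0:ℝ)..1, U (Δt - Δt * s) * B * U (Δt * s) := by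
        have := intervalIntegral.integral_comp_sub_left
          (a := (0:ℝ)) (b := 1) (fun s => U (s * Δt) * B * U ((1 - s) * Δt)) 1
        simp only [sub_self, sub_zero] at this
        rw [← this]
        congr 1
        funext s
        rw [show (1:ℝ) - (1 - s) = s by ring, show Δt - Δt * s = (1 - s) * Δt by ring,
          show Δt * s = s * Δt by ring]
      -- scaling s ↦ Δt * s
      have h3 : Δt • (∫ s in (0:ℝ)..1, U (Δt - Δt * s) * B * U (Δt * s))
          = ∫ τ in (0:ℝ)..Δt, U (Δt - τ) * B * U τ := by
        have := intervalIntegral.smul_integral_comp_mul_left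
          (a := (0:ℝ)) (b := 1) (fun τ => U (Δt - τ) * B * U τ) Δt
        simpa using this
      calc c • Φ u0 = (-Complex.I) • ((Δt:ℂ) • Φ u0) := by rw [smul_smul, hc]
        _ = (-Complex.I) • (Δt • Φ u0) := by rw [Complex.coe_smul]
        _ = (-Complex.I) • (∫ τ in (0:ℝ)..Δt, U (Δt - τ) * B * U τ) := by
            rw [h1, h2, h3]
        _ = ∫ τ in (0:ℝ)..Δt, (-Complex.I) • (U (Δt - τ) * B * U τ) := by
            rw [intervalIntegral.integral_smul]
    rw [← hΦ0]
    exact hder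
  · -- the Hbar statement
    intro Hbar hHbar
    have hW : (Δt : ℂ) • Hbar = ∫ τ in (0:ℝ)..Δt, U τ * B * U (-τ) := by
      rw [hHbar]
      apply Matrix.ext; intro i j
      rw [grape_entry_intervalIntegral hcont2]
      rfl
    -- reflection τ ↦ Δt - τ
    have h4 : (∫ τ in (0:ℝ)..Δt, U (Δt - τ) * B * U τ)
        = ∫ τ in (0:ℝ)..Δt, U τ * B * U (Δt - τ) := by
      have := intervalIntegral.integral_comp_sub_left
        (a := (0:ℝ)) (b := Δt) (fun τ => U τ * B * U (Δt - τ)) Δt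
      simp only [sub_self, sub_zero] at this
      rw [← this]
      congr 1
      funext τ
      rw [show Δt - (Δt - τ) = τ by ring]
    have h5 : (∫ τ in (0:ℝ)..Δt, U τ * B * U (Δt - τ))
        = (∫ τ in (0:ℝ)..Δt, U τ * B * U (-τ)) * U Δt := by
      rw [← grape_intervalIntegral_mul_const hcont2]
      congr 1
      funext τ
      rw [hsplit τ, ← mul_assoc]
    rw [hgd, intervalIntegral.integral_smul, h4, h5, ← hW]
    rw [smul_mul_assoc, smul_smul, hc]
end
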